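/- Let Q̃ : (F×V)* → F be a quadratic form with Q̃(1,0*) = 0 and with F·(1,0*) being the radical of its polar form B̃. Then the linear mapping π ∘ D̃ ∘ π^T : V* → V is invertible, and the quadratic form Q̃^↓ : V → F, Q̃^↓(x) := Q̃(0, (π ∘ D̃ ∘ π^T)⁻¹(x)), has a non-degenerate polar form. -/

import Mathlib

/-! Setting: a field `F` and a finite-dimensional `F`-vector space `V`. The dual of
`F × V` is identified with `F × V*` via the pairing `⟨(a₀,a*),(x₀,x)⟩ = a₀x₀ + ⟨a*,x⟩`.
For a quadratic form `Q`, its polar form is `QuadraticMap.polar Q` (the bilinear map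
`Q.polarBilin`) and its radical is `LinearMap.ker Q.polarBilin`. -/

variable {F V : Type*} [Field F] [AddCommGroup V] [Module F V] [FiniteDimensional F V]

/-- The dual linear representation `β` of `AGL(V)` on `(F×V)* = F × V*`: for the affinity
`γ : x ↦ t + g x` (with `g ∈ GL(V)`, `t ∈ V`),
`γ^β (a₀, a*) = (a₀ - ⟨a* ∘ g⁻¹, t⟩, a* ∘ g⁻¹)`. -/
def betaMap (g : V ≃ₗ[F] V) (t : V) :
    (F × Module.Dual F V) →ₗ[F] (F × Module.Dual F V) :=
  LinearMap.prod
    (LinearMap.fst F F (Module.Dual F V) -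
      (Module.Dual.eval F V (g.symm t)).comp (LinearMap.snd F F (Module.Dual F V)))
    ((g.symm.toLinearMap.dualMap).comp (LinearMap.snd F F (Module.Dual F V)))

/-- Given a quadratic form `Q` on `V` whose induced map `D = Q.polarBilin` is bijective
(given here as the linear equivalence `e` with `↑e = Q.polarBilin`), the quadratic form
`Q^↑ : F × V* → F, (a₀, a*) ↦ Q (D⁻¹ a*)`. -/
def qUp (Q : QuadraticForm F V) (e : V ≃ₗ[F] Module.Dual F V) :
    QuadraticForm F (F × Module.Dual F V) :=
  Q.comp (e.symm.toLinearMap ∘ₗ LinearMap.snd F F (Module.Dual F V))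

/-- Given a quadratic form `Q̃` on `F × V*` such that `π ∘ D̃ ∘ π^T : V* → V` is invertible
(given here as the linear equivalence `T`, characterised by
`∀ a b, b (T a) = polar Q̃ (0,a) (0,b)`), the quadratic form
`Q̃^↓ : V → F, x ↦ Q̃ (0, T⁻¹ x)`. -/
def qDown (Qt : QuadraticForm F (F × Module.Dual F V)) (T : Module.Dual F V ≃ₗ[F] V) :
    QuadraticForm F V :=
  Qt.comp ((LinearMap.inr F F (Module.Dual F V)) ∘ₗ T.symm.toLinearMap)

/-- The weak orthogonal group `O'(W,Q)` of a metric vector space, as a set of linear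
endomorphisms: bijective isometries fixing the radical elementwise. -/
def wOrth {W : Type*} [AddCommGroup W] [Module F W] (Qt : QuadraticForm F W) :
    Set (W →ₗ[F] W) :=
  {φ | Function.Bijective φ ∧ (∀ w, Qt (φ w) = Qt w) ∧
    ∀ w ∈ LinearMap.ker Qt.polarBilin, φ w = w}

/-- The `β`-image `AO(V,Q)^β` of the motion group of `(V,Q)`. -/
def motionBetaSet (Q : QuadraticForm F V) :
    Set ((F × Module.Dual F V) →ₗ[F] (F × Module.Dual F V)) :=
  {φ | ∃ (g : V ≃ₗ[F] V) (t : V), (∀ x, Q (g x) = Q x) ∧ φ = betaMap g t}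

/-- The `β`-image `AO'(V,Q)^β` of the weak motion group of `(V,Q)`. -/
def wMotionBetaSet (Q : QuadraticForm F V) :
    Set ((F × Module.Dual F V) →ₗ[F] (F × Module.Dual F V)) :=
  {φ | ∃ (g : V ≃ₗ[F] V) (t : V), (∀ x, Q (g x) = Q x) ∧
    (∀ x ∈ LinearMap.ker Q.polarBilin, g x = x) ∧ φ = betaMap g t}

/-! The restriction of `B̃` to `0 × V*` is non-degenerate: a vector `(0,a)` orthogonal to
`0 × V*` is also orthogonal to the radical vector `(1,0*)`, hence lies in the radical `F·(1,0*)`,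
so `a = 0`. By finite-dimensionality this restriction, read as a map `V* → V** ≅ V`, is the
equivalence `T`. Pulling `Q̃` back along `x ↦ (0, T⁻¹ x)` gives the polar form
`(x, y) ↦ ⟨T⁻¹ y, x⟩`, which is non-degenerate because `T⁻¹` is bijective. -/

theorem ker_polarBilin_compl₁₂_inr_eq_bot {R M : Type*} [CommRing R] [AddCommGroup M]
    [Module R M] (Q : QuadraticForm R (R × M))
    (h : LinearMap.ker Q.polarBilin = Submodule.span R {((1 : R), (0 : M))}) :
    LinearMap.ker (Q.polarBilin.compl₁₂ (LinearMap.inr R R M) (LinearMap.inr R R M)) = ⊥ := by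
  rw [LinearMap.ker_eq_bot']
  intro a ha
  have h_one : Q.polarBilin (1, 0) = 0 := by
    rw [← LinearMap.mem_ker, h]
    exact Submodule.mem_span_singleton_self _
  have h_mem : ((0 : R), a) ∈ LinearMap.ker Q.polarBilin := by
    rw [LinearMap.mem_ker]
    refine LinearMap.ext fun ⟨c, b⟩ => ?_
    have h_decomp : ((c, b) : R × M) = c • (1, 0) + (0, b) := by simp
    have h_inr : Q.polarBilin (0, a) (0, b) = 0 := LinearMap.congr_fun ha b
    have h_fst : Q.polarBilin (0, a) (1, 0) = 0 := by
      rw [QuadraticMap.polarBilin_apply_apply, QuadraticMap.polar_comm,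
        ← QuadraticMap.polarBilin_apply_apply, h_one, LinearMap.zero_apply]
    rw [h_decomp, map_add, map_smul, h_fst, h_inr, smul_zero, add_zero, LinearMap.zero_apply]
  rw [h, Submodule.mem_span_singleton] at h_mem
  obtain ⟨r, hr⟩ := h_mem
  simpa using (congrArg Prod.snd hr).symm

theorem exists_linearEquiv_apply_dual_eq (B : Module.Dual F V →ₗ[F] Module.Dual F V →ₗ[F] F)
    (hB : LinearMap.ker B = ⊥) :
    ∃ T : Module.Dual F V ≃ₗ[F] V, ∀ a b : Module.Dual F V, b (T a) = B a b :=
  ⟨(B.linearEquivOfInjective (LinearMap.ker_eq_bot.mp hB) Subspace.dual_finrank_eq.symm).trans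
      (Module.evalEquiv F V).symm,
    fun _ b => Module.apply_evalEquiv_symm_apply F V b _⟩

theorem polarBilin_qDown_apply {W : Type*} [AddCommGroup W] [Module F W]
    {Qt : QuadraticForm F (F × Module.Dual F W)}
    {T : Module.Dual F W ≃ₗ[F] W}
    (hT : ∀ a b : Module.Dual F W, b (T a) = Qt.polarBilin (0, a) (0, b)) (x y : W) :
    (qDown Qt T).polarBilin x y = T.symm y x := by
  have h := hT (T.symm x) (T.symm y)
  rw [T.apply_symm_apply] at h
  rw [qDown, QuadraticMap.polarBilin_comp]
  exact h.symm

theorem ker_polarBilin_qDown_eq_bot {W : Type*} [AddCommGroup W] [Module F W]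
    {Qt : QuadraticForm F (F × Module.Dual F W)}
    {T : Module.Dual F W ≃ₗ[F] W}
    (hT : ∀ a b : Module.Dual F W, b (T a) = Qt.polarBilin (0, a) (0, b)) :
    LinearMap.ker (qDown Qt T).polarBilin = ⊥ := by
  rw [LinearMap.ker_eq_bot']
  intro x hx
  rw [← Module.forall_dual_apply_eq_zero_iff F x]
  intro φ
  simpa [polarBilin_qDown_apply hT] using LinearMap.congr_fun hx (T φ)

theorem stmt11 (Qt : QuadraticForm F (F × Module.Dual F V))
    (h2 : LinearMap.ker Qt.polarBilin =
      Submodule.span F {((1 : F), (0 : Module.Dual F V))}) :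
    (∃ T : Module.Dual F V ≃ₗ[F] V, ∀ a b : Module.Dual F V,
      b (T a) = Qt.polarBilin (0, a) (0, b)) ∧
    (∀ T : Module.Dual F V ≃ₗ[F] V,
      (∀ a b : Module.Dual F V, b (T a) = Qt.polarBilin (0, a) (0, b)) →
      LinearMap.ker (qDown Qt T).polarBilin = ⊥) :=
  ⟨exists_linearEquiv_apply_dual_eq _ (ker_polarBilin_compl₁₂_inr_eq_bot Qt h2),
    fun _ hT => ker_polarBilin_qDown_eq_bot hT⟩
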